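/- arXiv:1406.2714 — 2 statements merged into one kernel-verified Lean document; each statement's English description precedes it below -/
import Mathlib

section
/- Ordered extension: Let G = (V, F) be an S(k-2, k-1, n) Steiner system, and let v_1, …, v_n be an ordering of V with {v_1, …, v_{k-1}} ∈ F. Define F_i = {e ∈ F : e ⊆ {v_1, …, v_i}, v_i ∈ e} and E = ⋃_{i=k-1}^{n-1} {f ∪ {v_j} : f ∈ F_i, j > i}. Then H = (V, E) is a k-uniform 2-hypertree. -/
variable {V : Type*} [DecidableEq V]

/-- The list of consecutive `k`-windows (as finsets) of a vertex sequence. -/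
def windows (k : ℕ) (w : List V) : List (Finset V) :=
  (List.range (w.length + 1 - k)).map fun i => ((w.drop i).take k).toFinset

/-- `w` is the vertex sequence of a chain: `v₁ ≠ v_l`, each window is a `k`-set,
and the `l - k + 1` window edges are pairwise distinct. -/
def IsChainSeq (k : ℕ) (w : List V) : Prop :=
  k ≤ w.length ∧ w.head? ≠ w.getLast? ∧
  (∀ e ∈ windows k w, e.card = k) ∧ (windows k w).Nodup

/-- `w` is the vertex sequence of a semicycle: `v₁ = v_l`, each window is a `k`-set,
and the `l - k + 1` window edges are pairwise distinct. -/
def IsSemicycleSeq (k : ℕ) (w : List V) : Prop :=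
  k ≤ w.length ∧ w.head? = w.getLast? ∧
  (∀ e ∈ windows k w, e.card = k) ∧ (windows k w).Nodup

/-- A hypergraph with edge set `E` contains no semicycle as a subhypergraph. -/
def SemicycleFree (k : ℕ) (E : Finset (Finset V)) : Prop :=
  ¬ ∃ w : List V, IsSemicycleSeq k w ∧ ∀ e ∈ windows k w, e ∈ E

/-- Every two distinct vertices of `S` lie in a common chain subhypergraph of `E`. -/
def ChainConnOn (k : ℕ) (S : Finset V) (E : Finset (Finset V)) : Prop :=
  ∀ u ∈ S, ∀ v ∈ S, u ≠ v →
    ∃ w : List V, IsChainSeq k w ∧ (∀ e ∈ windows k w, e ∈ E) ∧ u ∈ w ∧ v ∈ w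

/-- Chain-connectedness on the whole (finite) vertex type. -/
def ChainConn [Fintype V] (k : ℕ) (E : Finset (Finset V)) : Prop :=
  ChainConnOn k Finset.univ E

/-- A `k`-uniform hypertree: chain-connected and semicycle-free. -/
def IsHypertree [Fintype V] (k : ℕ) (E : Finset (Finset V)) : Prop :=
  (∀ e ∈ E, e.card = k) ∧ ChainConn k E ∧ SemicycleFree k E

/-- Every chain subhypergraph of `E` has length (number of edges) at most `l`. -/
def ChainsLenLE (k l : ℕ) (E : Finset (Finset V)) : Prop :=
  ∀ w : List V, IsChainSeq k w → (∀ e ∈ windows k w, e ∈ E) →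
    w.length + 1 - k ≤ l

/-- An `l`-hypertree: a hypertree all of whose chains have length at most `l`. -/
def IsLHypertree [Fintype V] (k l : ℕ) (E : Finset (Finset V)) : Prop :=
  IsHypertree k E ∧ ChainsLenLE k l E

/-- Edge-minimal: deleting any edge destroys chain-connectedness. -/
def EdgeMinimal [Fintype V] (k : ℕ) (E : Finset (Finset V)) : Prop :=
  ∀ e ∈ E, ¬ ChainConn k (E.erase e)

/-- Edge-maximal: adding any new `k`-set as an edge creates a semicycle. -/
def EdgeMaximal [Fintype V] (k : ℕ) (E : Finset (Finset V)) : Prop :=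
  ∀ s : Finset V, s.card = k → s ∉ E → ¬ SemicycleFree k (insert s E)

/-- `S` is a (tight) star subhypergraph of `E`: a nonempty set of edges of `E`
all containing a common `(k-1)`-set kernel. -/
def IsStarSub (k : ℕ) (E S : Finset (Finset V)) : Prop :=
  S ⊆ E ∧ S.Nonempty ∧ ∃ K : Finset V, K.card = k - 1 ∧ ∀ e ∈ S, K ⊆ e

/-- `S` is a maximal star subhypergraph of `E`. -/
def IsMaxStar (k : ℕ) (E S : Finset (Finset V)) : Prop :=
  IsStarSub k E S ∧ ∀ T, IsStarSub k E T → S ⊆ T → S = T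

/-! Every edge of `E` is an edge `f ∈ F` together with a vertex that comes after all of `f` in
the ordering. Hence a `(k-1)`-set lying in two distinct edges of `E` is itself in `F`: otherwise
it contains the last vertex of both edges, and either these coincide, and then the Steiner
property forces the two underlying edges of `F` to agree, or each of them precedes the other.
Three consecutive windows of a chain would therefore yield two members of `F` sharing a
`(k-2)`-set, against the Steiner property; so chains have at most two edges, while a semicycle
needs at least three. Chain-connectivity comes from the star `{v_1, …, v_{k-1}} ∪ {v_j}`,
`j ≥ k`: any two vertices lie in one edge or in two edges of it. -/

theorem List.nodup_of_card_toFinset_eq_length {l : List V} (h : l.toFinset.card = l.length) :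
    l.Nodup :=
  Multiset.toFinset_card_eq_card_iff_nodup.mp h

section Windows

variable {k : ℕ}

theorem windows_cons {w : List V} (a : V) (h : k ≤ w.length + 1) :
    windows k (a :: w) = ((a :: w).take k).toFinset :: windows k w := by
  rw [windows, List.length_cons, show w.length + 1 + 1 - k = (w.length + 1 - k) + 1 by omega,
    List.range_succ_eq_map, List.map_cons, List.map_map]
  rfl

theorem windows_of_length_eq {w : List V} (h : w.length = k) : windows k w = [w.toFinset] := by
  rw [windows, h, Nat.add_sub_cancel_left]
  simp [← h]

theorem IsSemicycleSeq.add_two_le_length (hk : 2 ≤ k) {w : List V} (hw : IsSemicycleSeq k w) :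
    k + 2 ≤ w.length := by
  obtain ⟨hkw, hends, hcard, hnd⟩ := hw
  obtain ⟨a, w', rfl⟩ := List.exists_cons_of_length_pos (by omega : 0 < w.length)
  have hw' : w' ≠ [] := by rintro rfl; simp at hkw; omega
  have ha : a ∈ w' := by
    rw [List.head?_cons, List.getLast?_cons, List.getLast?_eq_some_getLast hw'] at hends
    exact Option.some.inj hends ▸ List.getLast_mem hw'
  by_contra! hlen
  rw [List.length_cons] at hkw hlen
  rcases (by omega : w'.length + 1 = k ∨ w'.length = k) with hlen | hlen
  · rw [windows_of_length_eq (by simpa using hlen)] at hcard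
    have hnd' : (a :: w').Nodup := List.nodup_of_card_toFinset_eq_length
      (by rw [hcard _ (List.mem_singleton_self _)]; simpa using hlen.symm)
    exact (List.nodup_cons.mp hnd').1 ha
  · rw [windows_cons a (by omega), windows_of_length_eq hlen] at hcard hnd
    have hsub : ((a :: w').take k).toFinset ⊆ w'.toFinset := by
      intro x hx
      rw [List.mem_toFinset] at hx ⊢
      rcases List.mem_cons.mp (List.mem_of_mem_take hx) with rfl | hx
      exacts [ha, hx]
    have := Finset.eq_of_subset_of_card_le hsub (by
      rw [hcard _ List.mem_cons_self, ← hlen]; exact List.toFinset_card_le _)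
    simp [this] at hnd

theorem List.exists_eq_cons_cons_append_cons_cons {α : Type*} {l : List α} {m : ℕ}
    (h : m + 4 ≤ l.length) :
    ∃ x₀ x₁ L y₀ y₁ r, L.length = m ∧ l = x₀ :: x₁ :: (L ++ y₀ :: y₁ :: r) := by
  match l, h with
  | x₀ :: x₁ :: d, h =>
    match hd : d.drop m with
    | y₀ :: y₁ :: r =>
      refine ⟨x₀, x₁, d.take m, y₀, y₁, r, by simp at h ⊢; omega, ?_⟩
      rw [← hd, List.take_append_drop]
    | [] | [_] =>
      have := congrArg List.length hd
      simp at h this; omega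

theorem windows_cons_cons_append_cons_cons (x₀ x₁ y₀ y₁ : V) {L r : List V} {m : ℕ}
    (hL : L.length = m) :
    ∃ W, windows (m + 2) (x₀ :: x₁ :: (L ++ y₀ :: y₁ :: r)) = (x₀ :: x₁ :: L).toFinset ::
      (x₁ :: (L ++ [y₀])).toFinset :: (L ++ [y₀, y₁]).toFinset :: W := by
  obtain ⟨b, t, hbt⟩ := List.exists_cons_of_ne_nil (by simp : L ++ y₀ :: y₁ :: r ≠ [])
  have hlen : m + 2 ≤ t.length + 1 := by
    have := congrArg List.length hbt
    simp at this; omega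
  refine ⟨windows (m + 2) t, ?_⟩
  rw [windows_cons _ (by simp; omega), windows_cons _ (by simp; omega), hbt, windows_cons _ hlen,
    ← hbt]
  simp [List.take_append, List.take_of_length_le, hL]

end Windows

section SharedFaces

variable {k : ℕ} {F E : Finset (Finset V)}

theorem length_lt_of_windows_mem (hk : 2 ≤ k)
    (hF : ∀ s : Finset V, s.card = k - 2 → ∀ f ∈ F, ∀ g ∈ F, s ⊆ f → s ⊆ g → f = g)
    (hshared : ∀ A : Finset V, A.card = k - 1 →
      ∀ e₁ ∈ E, ∀ e₂ ∈ E, e₁ ≠ e₂ → A ⊆ e₁ → A ⊆ e₂ → A ∈ F)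
    {w : List V} (hcard : ∀ e ∈ windows k w, e.card = k) (hnd : (windows k w).Nodup)
    (hE : ∀ e ∈ windows k w, e ∈ E) : w.length < k + 2 := by
  obtain ⟨m, rfl⟩ : ∃ m, k = m + 2 := ⟨k - 2, by omega⟩
  by_contra! hlen
  obtain ⟨x₀, x₁, L, y₀, y₁, r, hL, rfl⟩ :=
    List.exists_eq_cons_cons_append_cons_cons (m := m) (by omega)
  obtain ⟨W, hW⟩ := windows_cons_cons_append_cons_cons x₀ x₁ y₀ y₁ (r := r) hL
  rw [hW] at hcard hnd hE
  have hmid : (x₁ :: (L ++ [y₀])).Nodup :=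
    List.nodup_of_card_toFinset_eq_length <| by
      rw [hcard _ (List.mem_cons_of_mem _ List.mem_cons_self)]; simp [hL]
  simp only [List.nodup_cons, List.nodup_append, List.mem_append, List.mem_singleton,
    List.nodup_nil, not_or] at hmid
  obtain ⟨⟨hx₁L, hx₁y₀⟩, hLnd, -, hy₀L⟩ := hmid
  replace hy₀L : y₀ ∉ L := fun h => hy₀L _ h _ rfl rfl
  simp only [List.nodup_cons, List.mem_cons, not_or] at hnd
  obtain ⟨⟨hne₀₁, -⟩, ⟨hne₁₂, -⟩, -⟩ := hnd
  have hS : L.toFinset.card = m := by rw [List.toFinset_card_of_nodup hLnd, hL]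
  have hA : insert x₁ L.toFinset ∈ F := by
    refine hshared _ ?_ _ (hE _ (by simp)) _ (hE _ (by simp)) hne₀₁ ?_ ?_
    · rw [Finset.card_insert_of_notMem (by simpa), hS]; rfl
    all_goals intro a; simp; tauto
  have hB : insert y₀ L.toFinset ∈ F := by
    refine hshared _ ?_ _ (hE _ (by simp)) _ (hE _ (by simp)) hne₁₂ ?_ ?_
    · rw [Finset.card_insert_of_notMem (by simpa), hS]; rfl
    all_goals intro a; simp; tauto
  have := hF L.toFinset hS _ hA _ hB (Finset.subset_insert _ _) (Finset.subset_insert _ _)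
  rcases Finset.mem_insert.mp (this ▸ Finset.mem_insert_self _ _ : x₁ ∈ insert y₀ L.toFinset)
    with h | h
  exacts [hx₁y₀ h, hx₁L (List.mem_toFinset.mp h)]

end SharedFaces

def IsUpwardExtension {α : Type*} [Preorder α] (r : V → α) (F E : Finset (Finset V)) : Prop :=
  ∀ e ∈ E, ∃ x, ∃ f ∈ F, (∀ y ∈ f, r y < r x) ∧ e = insert x f

namespace IsUpwardExtension

variable {α : Type*} [Preorder α] {r : V → α} {k : ℕ} {F E : Finset (Finset V)}

theorem card_eq (hE : IsUpwardExtension r F E) (hFu : ∀ f ∈ F, f.card = k - 1) (hk : 1 ≤ k) :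
    ∀ e ∈ E, e.card = k := by
  intro e he
  obtain ⟨x, f, hf, hfx, rfl⟩ := hE e he
  rw [Finset.card_insert_of_notMem fun hx => lt_irrefl _ (hfx x hx), hFu f hf]
  omega

theorem mem_of_subset_of_subset (hE : IsUpwardExtension r F E)
    (hFu : ∀ f ∈ F, f.card = k - 1)
    (hF : ∀ s : Finset V, s.card = k - 2 → ∀ f ∈ F, ∀ g ∈ F, s ⊆ f → s ⊆ g → f = g)
    {A : Finset V} (hA : A.card = k - 1) {e₁ e₂ : Finset V} (he₁ : e₁ ∈ E) (he₂ : e₂ ∈ E)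
    (hne : e₁ ≠ e₂) (h₁ : A ⊆ e₁) (h₂ : A ⊆ e₂) : A ∈ F := by
  obtain ⟨x₁, f₁, hf₁, hfx₁, rfl⟩ := hE e₁ he₁
  obtain ⟨x₂, f₂, hf₂, hfx₂, rfl⟩ := hE e₂ he₂
  have eq_of_notMem {x f} (hf : f ∈ F) (h : A ⊆ insert x f) (hx : x ∉ A) : A = f :=
    Finset.eq_of_subset_of_card_le ((Finset.subset_insert_iff_of_notMem hx).mp h)
      (by rw [hFu f hf, hA])
  by_cases hx₁ : x₁ ∈ A
  swap; · exact eq_of_notMem hf₁ h₁ hx₁ ▸ hf₁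
  by_cases hx₂ : x₂ ∈ A
  swap; · exact eq_of_notMem hf₂ h₂ hx₂ ▸ hf₂
  exfalso
  obtain rfl | hx := eq_or_ne x₁ x₂
  · refine hne (congrArg _ (hF (A.erase x₁) ?_ f₁ hf₁ f₂ hf₂ ?_ ?_))
    · rw [Finset.card_erase_of_mem hx₁, hA]; rfl
    · exact Finset.subset_insert_iff.mp h₁
    · exact Finset.subset_insert_iff.mp h₂
  · have h₂₁ := hfx₁ x₂ ((Finset.mem_insert.mp (h₁ hx₂)).resolve_left hx.symm)
    have h₁₂ := hfx₂ x₁ ((Finset.mem_insert.mp (h₂ hx₁)).resolve_left hx)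
    exact lt_asymm h₂₁ h₁₂

end IsUpwardExtension

section Star

variable {k : ℕ} {K : Finset V} {x y : V}

theorem isChainSeq_cons_toList (hk : 2 ≤ k) (hK : K.card = k - 1) (hx : x ∉ K) :
    IsChainSeq k (x :: K.toList) ∧ windows k (x :: K.toList) = [insert x K] := by
  have hlen : (x :: K.toList).length = k := by simp [hK]; omega
  have hW : windows k (x :: K.toList) = [insert x K] := by
    rw [windows_of_length_eq hlen]; simp
  have hne : K.toList ≠ [] := List.ne_nil_of_length_pos (by simp [hK]; omega)
  refine ⟨⟨hlen.ge, ?_, ?_, by simp [hW]⟩, hW⟩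
  · rw [List.head?_cons, List.getLast?_cons, List.getLast?_eq_some_getLast hne]
    intro h
    exact hx (Finset.mem_toList.mp (Option.some.inj h ▸ List.getLast_mem hne))
  · simp [hW, Finset.card_insert_of_notMem hx, hK]; omega

theorem isChainSeq_cons_toList_append (hk : 1 ≤ k) (hK : K.card = k - 1) (hx : x ∉ K)
    (hy : y ∉ K) (hxy : x ≠ y) :
    IsChainSeq k (x :: (K.toList ++ [y])) ∧
      windows k (x :: (K.toList ++ [y])) = [insert x K, insert y K] := by
  have hlen : (K.toList ++ [y]).length = k := by simp [hK]; omega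
  have hW : windows k (x :: (K.toList ++ [y])) = [insert x K, insert y K] := by
    rw [windows_cons x (by omega), windows_of_length_eq hlen,
      List.take_cons (by omega), List.take_left' (by simp [hK])]
    ext; simp
  refine ⟨⟨by simp [hK]; omega, ?_, ?_, ?_⟩, hW⟩
  · simpa [List.getLast?_cons] using hxy
  · simp [hW, Finset.card_insert_of_notMem hx, Finset.card_insert_of_notMem hy, hK]; omega
  · simp only [hW, List.nodup_cons, List.mem_singleton, List.not_mem_nil, not_false_eq_true,
      List.nodup_nil, and_true]
    intro h
    exact (Finset.mem_insert.mp (h ▸ Finset.mem_insert_self x K)).elim hxy hx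

theorem chainConn_of_forall_insert_mem [Fintype V] {E : Finset (Finset V)} (hk : 2 ≤ k)
    (hK : K.card = k - 1) (hout : ∃ z, z ∉ K) (hE : ∀ z ∉ K, insert z K ∈ E) :
    ChainConn k E := by
  have petal {z} (hz : z ∉ K) :
      ∃ w, IsChainSeq k w ∧ (∀ e ∈ windows k w, e ∈ E) ∧ ∀ u ∈ insert z K, u ∈ w := by
    obtain ⟨hw, hW⟩ := isChainSeq_cons_toList hk hK hz
    refine ⟨_, hw, by simpa [hW] using hE z hz, fun u hu => ?_⟩
    simpa using hu
  intro u _ u' _ hne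
  by_cases hu : u ∈ K <;> by_cases hu' : u' ∈ K
  · obtain ⟨z, hz⟩ := hout
    obtain ⟨w, hw, hwE, hmem⟩ := petal hz
    exact ⟨w, hw, hwE, hmem u (by simp [hu]), hmem u' (by simp [hu'])⟩
  · obtain ⟨w, hw, hwE, hmem⟩ := petal hu'
    exact ⟨w, hw, hwE, hmem u (by simp [hu]), hmem u' (by simp)⟩
  · obtain ⟨w, hw, hwE, hmem⟩ := petal hu
    exact ⟨w, hw, hwE, hmem u (by simp), hmem u' (by simp [hu'])⟩
  · obtain ⟨hw, hW⟩ := isChainSeq_cons_toList_append (by omega) hK hu hu' hne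
    exact ⟨_, hw, by simp [hW, hE u hu, hE u' hu'], by simp⟩

end Star

def initialSegment {n : ℕ} (v : Fin n → V) (m : ℕ) : Finset V :=
  (Finset.univ.filter (fun t : Fin n => (t : ℕ) < m)).image v

section OrderedExtension

variable {n k : ℕ} {v : Fin n → V} {F E : Finset (Finset V)}

theorem isUpwardExtension_of_ordered {r : V → Fin n} (hr : Function.LeftInverse r v)
    (hE : ∀ e, e ∈ E ↔ ∃ i j : Fin n, i < j ∧ ∃ f ∈ F,
      f ⊆ (Finset.univ.filter (fun t : Fin n => t ≤ i)).image v ∧ v i ∈ f ∧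
      e = insert (v j) f) :
    IsUpwardExtension r F E := by
  intro e he
  obtain ⟨i, j, hij, f, hf, hfi, -, rfl⟩ := (hE e).mp he
  refine ⟨v j, f, hf, fun y hy => ?_, rfl⟩
  obtain ⟨t, ht, rfl⟩ := Finset.mem_image.mp (hfi hy)
  rw [hr t, hr j]
  exact (Finset.mem_filter.mp ht).2.trans_lt hij

theorem insert_initialSegment_mem (hk : 2 ≤ k) (hv : Function.Surjective v)
    (hE : ∀ e, e ∈ E ↔ ∃ i j : Fin n, i < j ∧ ∃ f ∈ F,
      f ⊆ (Finset.univ.filter (fun t : Fin n => t ≤ i)).image v ∧ v i ∈ f ∧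
      e = insert (v j) f)
    (hfirst : initialSegment v (k - 1) ∈ F) :
    ∀ x ∉ initialSegment v (k - 1), insert x (initialSegment v (k - 1)) ∈ E := by
  intro x hx
  obtain ⟨j, rfl⟩ := hv x
  have hj : k - 1 ≤ (j : ℕ) := by
    by_contra h
    exact hx (Finset.mem_image_of_mem v (by simp; omega))
  rw [hE]
  refine ⟨⟨k - 2, by omega⟩, j, Fin.lt_def.mpr (by simp; omega), _, hfirst, ?_, ?_, rfl⟩
  · intro y hy
    obtain ⟨t, ht, rfl⟩ := Finset.mem_image.mp hy
    exact Finset.mem_image_of_mem v (by simp at ht ⊢; rw [Fin.le_def]; simp; omega)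
  · exact Finset.mem_image_of_mem v (by simp; omega)

end OrderedExtension

theorem stmt10_general {V : Type*} [Fintype V] [DecidableEq V] (n k : ℕ) (hk : 3 ≤ k)
    (hkn : k ≤ n)
    (F : Finset (Finset V)) (hFu : ∀ f ∈ F, f.card = k - 1)
    (hFst : ∀ s : Finset V, s.card = k - 2 → ∃! f, f ∈ F ∧ s ⊆ f)
    (v : Fin n → V) (hv : Function.Bijective v)
    (hfirst : (Finset.univ.filter (fun t : Fin n => (t : ℕ) < k - 1)).image v ∈ F)
    (E : Finset (Finset V))
    (hE : ∀ e, e ∈ E ↔ ∃ i j : Fin n, i < j ∧ ∃ f ∈ F,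
      f ⊆ (Finset.univ.filter (fun t : Fin n => t ≤ i)).image v ∧ v i ∈ f ∧
      e = insert (v j) f) :
    IsLHypertree k 2 E := by
  have hF : ∀ s : Finset V, s.card = k - 2 → ∀ f ∈ F, ∀ g ∈ F, s ⊆ f → s ⊆ g → f = g :=
    fun s hs f hf g hg hsf hsg => (hFst s hs).unique ⟨hf, hsf⟩ ⟨hg, hsg⟩
  have hup := isUpwardExtension_of_ordered (Equiv.ofBijective v hv).symm_apply_apply hE
  have hshort {w : List V} := length_lt_of_windows_mem (w := w) (by omega) hF
    fun _ hA _ he₁ _ he₂ => hup.mem_of_subset_of_subset hFu hF hA he₁ he₂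
  have hout : v ⟨k - 1, by omega⟩ ∉ initialSegment v (k - 1) := by
    simp only [initialSegment, Finset.mem_image, Finset.mem_filter, Finset.mem_univ, true_and,
      hv.1.eq_iff, Fin.ext_iff, not_exists, not_and]
    omega
  refine ⟨⟨hup.card_eq hFu (by omega), ?_, ?_⟩, ?_⟩
  · exact chainConn_of_forall_insert_mem (by omega) (hFu _ hfirst) ⟨_, hout⟩
      (insert_initialSegment_mem (by omega) hv.2 hE hfirst)
  · rintro ⟨w, hw, hwE⟩
    have := hw.add_two_le_length (by omega)
    have := hshort hw.2.2.1 hw.2.2.2 hwE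
    omega
  · intro w hw hwE
    have := hshort hw.2.2.1 hw.2.2.2 hwE
    omega

/-- Ordered extension. -/
theorem stmt10 {V : Type*} [Fintype V] [DecidableEq V] (n k : ℕ) (hk : 3 ≤ k)
    (hkn : k ≤ n) (hn : Fintype.card V = n)
    (F : Finset (Finset V)) (hFu : ∀ f ∈ F, f.card = k - 1)
    (hFst : ∀ s : Finset V, s.card = k - 2 → ∃! f, f ∈ F ∧ s ⊆ f)
    (v : Fin n → V) (hv : Function.Bijective v)
    (hfirst : (Finset.univ.filter (fun t : Fin n => (t : ℕ) < k - 1)).image v ∈ F)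
    (E : Finset (Finset V))
    (hE : ∀ e, e ∈ E ↔ ∃ i j : Fin n, i < j ∧ ∃ f ∈ F,
      f ⊆ (Finset.univ.filter (fun t : Fin n => t ≤ i)).image v ∧ v i ∈ f ∧
      e = insert (v j) f) :
    IsLHypertree k 2 E :=
  stmt10_general n k hk hkn F hFu hFst v hv hfirst E hE
end

section
/- If F = (V, E) is a k-uniform edge-minimal hypertree on n vertices, then |E| ≤ (n − k + 1)·n(n−1)/2. -/
variable {V : Type*} [DecidableEq V]

/-! By edge-minimality every edge `e` is forced by some pair `P = {u, v}`: `e` lies on every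
chain through `P`, since otherwise `E \ {e}` would still connect all pairs. Fixing one chain
through `P`, all edges forced by `P` are edges of that chain. In a semicycle-free hypergraph a
chain never repeats a vertex (the stretch between two occurrences would be a semicycle), so it
has at most `n - k + 1` edges; summing over the `n(n-1)/2` pairs gives the bound. -/

@[simp] lemma length_windows (k : ℕ) (w : List V) :
    (windows k w).length = w.length + 1 - k := by
  simp [windows]

lemma windows_drop (k : ℕ) {i : ℕ} {w : List V} (hi : i ≤ w.length) :
    windows k (w.drop i) = (windows k w).drop i := by
  apply List.ext_getElem
  · simp only [length_windows, List.length_drop]; omega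
  · intro t _ _
    simp [windows, List.drop_drop]

lemma windows_take (k m : ℕ) (w : List V) :
    windows k (w.take m) = (windows k w).take (m + 1 - k) := by
  apply List.ext_getElem
  · simp only [length_windows, List.length_take]; omega
  · intro t h _
    simp only [length_windows, List.length_take] at h
    simp only [windows, List.getElem_map, List.getElem_range, List.getElem_take]
    rw [List.drop_take, List.take_take, Nat.min_eq_left (by omega)]

lemma windows_drop_take_sublist (k m : ℕ) {i : ℕ} {w : List V} (hi : i ≤ w.length) :
    (windows k ((w.drop i).take m)).Sublist (windows k w) := by
  rw [windows_take, windows_drop k hi]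
  exact (List.take_sublist _ _).trans (List.drop_sublist _ _)

section Chains

variable {k : ℕ} {E : Finset (Finset V)}

lemma mem_windows {w : List V} {s : ℕ} (hs : s + k ≤ w.length) :
    ((w.drop s).take k).toFinset ∈ windows k w :=
  List.mem_map.2 ⟨s, List.mem_range.2 (by omega), rfl⟩

lemma nodup_window {w : List V} (hcard : ∀ e ∈ windows k w, e.card = k) {s : ℕ}
    (hs : s + k ≤ w.length) : ((w.drop s).take k).Nodup := by
  have hlen : ((w.drop s).take k).toFinset.card = ((w.drop s).take k).length := by
    rw [hcard _ (mem_windows hs)]; simp only [List.length_take, List.length_drop]; omega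
  exact Multiset.toFinset_card_eq_card_iff_nodup.1 hlen

lemma eq_of_getElem_eq_of_lt_add {w : List V} (hk : k ≤ w.length)
    (hcard : ∀ e ∈ windows k w, e.card = k) {i j : ℕ} (hij : i ≤ j) (hj : j < w.length)
    (hjk : j < i + k) (heq : w[i] = w[j]) : i = j := by
  set s := min i (w.length - k)
  have hnd := nodup_window hcard (s := s) (by omega)
  have hlen : ((w.drop s).take k).length = k := by
    simp only [List.length_take, List.length_drop]; omega
  have hw : ∀ t (ht : s ≤ t) (ht' : t < s + k) (htw : t < w.length),
      ((w.drop s).take k)[t - s]'(by rw [hlen]; omega) = w[t] := by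
    intro t ht _ _
    simp only [List.getElem_take, List.getElem_drop]
    exact getElem_congr_idx (by omega)
  have := hnd.getElem_inj_iff.1 ((hw i (by omega) (by omega) _).trans (heq.trans
    (hw j (by omega) (by omega) hj).symm))
  omega

lemma isSemicycleSeq_drop_take {w : List V} (hcard : ∀ e ∈ windows k w, e.card = k)
    (hnd : (windows k w).Nodup) {i j : ℕ} (hij : i + k ≤ j) (hj : j < w.length)
    (heq : w[i] = w[j]) : IsSemicycleSeq k ((w.drop i).take (j - i + 1)) := by
  have hsub := windows_drop_take_sublist k (j - i + 1) (by omega : i ≤ w.length)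
  have hlen : ((w.drop i).take (j - i + 1)).length = j - i + 1 := by
    simp only [List.length_take, List.length_drop]; omega
  refine ⟨by omega, ?_, fun e he => hcard e (hsub.subset he), hsub.nodup hnd⟩
  rw [List.head?_eq_getElem?, List.getLast?_eq_getElem?, hlen, Nat.add_sub_cancel,
    List.getElem?_take_of_lt (by omega), List.getElem?_take_of_lt (by omega),
    List.getElem?_drop, List.getElem?_drop,
    Nat.add_sub_cancel' (by omega), add_zero, List.getElem?_eq_getElem (by omega),
    List.getElem?_eq_getElem hj, heq]

lemma SemicycleFree.nodup (hsf : SemicycleFree k E) {w : List V} (hw : IsChainSeq k w)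
    (hE : ∀ e ∈ windows k w, e ∈ E) : w.Nodup := by
  obtain ⟨hk, -, hcard, hnd⟩ := hw
  refine List.pairwise_iff_getElem.2 fun i j hi hj hij heq => ?_
  rcases lt_or_ge j (i + k) with hjk | hjk
  · exact hij.ne (eq_of_getElem_eq_of_lt_add hk hcard hij.le hj hjk heq)
  · exact hsf ⟨_, isSemicycleSeq_drop_take hcard hnd hjk hj heq,
      fun e he => hE e ((windows_drop_take_sublist k _ hi.le).subset he)⟩

lemma SemicycleFree.chainsLenLE [Fintype V] (hsf : SemicycleFree k E) :
    ChainsLenLE k (Fintype.card V - k + 1) E := fun w hw hE => by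
  have := (hsf.nodup hw hE).length_le_card
  omega

open Classical in
/-- For a pair `P` this is the paper's `S(P)`: the edges on every chain through `P`, i.e. those
whose deletion disconnects `P`. -/
noncomputable def edgesOnAllChains (k : ℕ) (E : Finset (Finset V)) (P : Finset V) :
    Finset (Finset V) :=
  E.filter fun e => ∀ w : List V, IsChainSeq k w → (∀ x ∈ windows k w, x ∈ E) →
    (∀ v ∈ P, v ∈ w) → e ∈ windows k w

lemma mem_edgesOnAllChains {P e : Finset V} :
    e ∈ edgesOnAllChains k E P ↔ e ∈ E ∧ ∀ w : List V, IsChainSeq k w →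
      (∀ x ∈ windows k w, x ∈ E) → (∀ v ∈ P, v ∈ w) → e ∈ windows k w := by
  classical
  simp only [edgesOnAllChains, Finset.mem_filter]

lemma IsChainSeq.card_edgesOnAllChains_le {w : List V} (hw : IsChainSeq k w) {l : ℕ}
    (hlen : ChainsLenLE k l E) {P : Finset V} (hE : ∀ e ∈ windows k w, e ∈ E)
    (hP : ∀ v ∈ P, v ∈ w) :
    (edgesOnAllChains k E P).card ≤ l :=
  calc (edgesOnAllChains k E P).card
      ≤ (windows k w).toFinset.card := Finset.card_le_card fun _ he =>
        List.mem_toFinset.2 ((mem_edgesOnAllChains.1 he).2 w hw hE hP)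
    _ ≤ (windows k w).length := List.toFinset_card_le _
    _ ≤ l := (length_windows k w).trans_le (hlen w hw hE)

variable [Fintype V]

lemma ChainConn.card_edgesOnAllChains_le {l : ℕ} (hconn : ChainConn k E)
    (hlen : ChainsLenLE k l E) {P : Finset V} (hP : P ∈ Finset.univ.powersetCard 2) :
    (edgesOnAllChains k E P).card ≤ l := by
  obtain ⟨u, v, huv, rfl⟩ := Finset.card_eq_two.1 (Finset.mem_powersetCard.1 hP).2
  obtain ⟨w, hw, hE, hu, hv⟩ := hconn u (Finset.mem_univ u) v (Finset.mem_univ v) huv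
  exact hw.card_edgesOnAllChains_le hlen hE (by simp [hu, hv])

lemma EdgeMinimal.exists_mem_edgesOnAllChains (hmin : EdgeMinimal k E) {e : Finset V}
    (he : e ∈ E) : ∃ P ∈ Finset.univ.powersetCard 2, e ∈ edgesOnAllChains k E P := by
  have hdisc := hmin e he
  simp only [ChainConn, ChainConnOn, not_forall, not_exists] at hdisc
  obtain ⟨u, -, v, -, huv, hnone⟩ := hdisc
  refine ⟨{u, v}, Finset.mem_powersetCard.2 ⟨Finset.subset_univ _, Finset.card_pair huv⟩,
    mem_edgesOnAllChains.2 ⟨he, fun w hw hE hP => ?_⟩⟩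
  by_contra hew
  exact hnone w ⟨hw, fun x hx => Finset.mem_erase.2 ⟨fun hxe => hew (hxe ▸ hx), hE x hx⟩,
    hP u (by simp), hP v (by simp)⟩

theorem card_le_choose_two_mul_of_edgeMinimal {l : ℕ} (hconn : ChainConn k E)
    (hlen : ChainsLenLE k l E) (hmin : EdgeMinimal k E) :
    E.card ≤ (Fintype.card V).choose 2 * l :=
  calc E.card
      ≤ ((Finset.univ.powersetCard 2).biUnion (edgesOnAllChains k E)).card :=
        Finset.card_le_card fun _ he =>
          Finset.mem_biUnion.2 (hmin.exists_mem_edgesOnAllChains he)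
    _ ≤ ∑ P ∈ Finset.univ.powersetCard 2, (edgesOnAllChains k E P).card :=
        Finset.card_biUnion_le
    _ ≤ (Finset.univ.powersetCard 2 : Finset (Finset V)).card * l :=
        Finset.sum_le_card_nsmul _ _ _ fun P hP => hconn.card_edgesOnAllChains_le hlen hP
    _ = (Fintype.card V).choose 2 * l := by rw [Finset.card_powersetCard, Finset.card_univ]

end Chains

/-- a `k`-uniform edge-minimal hypertree on `n` vertices has at
most `(n - k + 1)·n(n-1)/2` edges. -/
theorem stmt12 {V : Type*} [Fintype V] [DecidableEq V] (n k : ℕ)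
    (hn : Fintype.card V = n)
    (E : Finset (Finset V)) (hH : IsHypertree k E) (hmin : EdgeMinimal k E) :
    E.card ≤ (n - k + 1) * (n * (n - 1) / 2) := by
  obtain ⟨-, hconn, hsf⟩ := hH
  subst hn
  calc E.card ≤ (Fintype.card V).choose 2 * (Fintype.card V - k + 1) :=
        card_le_choose_two_mul_of_edgeMinimal hconn hsf.chainsLenLE hmin
    _ = _ := by rw [Nat.choose_two_right, Nat.mul_comm]
end
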